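/- arXiv:1706.02811 — 3 statements merged into one kernel-verified Lean document; each statement's English description precedes it below -/
import Mathlib

section
/- For every formal power series f over a field K and all natural numbers m and n, there exists an (m,n)-Padé pair (p, q) for f with q ≠ 0. -/
/-!
Vanishing of the coefficients of `q·f` in degrees `m+1, …, m+n` is a system of `n` homogeneous
linear equations in the `n+1` coefficients of `q`, so it has a nonzero solution `q`; taking `p` to
be the truncation of `q·f` below degree `m+1` then kills all coefficients of `q·f − p` up to
degree `m+n`.
-/

/-- `(p, q)` is an `(m,n)`-Padé pair for the formal power series `f`:
`deg p ≤ m`, `deg q ≤ n`, and `X^(m+n+1)` divides `q·f − p`. -/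
def IsPadePair {K : Type*} [Field K] (f : PowerSeries K) (m n : ℕ)
    (p q : Polynomial K) : Prop :=
  p.degree ≤ (m : WithBot ℕ) ∧ q.degree ≤ (n : WithBot ℕ) ∧
    (PowerSeries.X : PowerSeries K) ^ (m + n + 1) ∣
      ((q : PowerSeries K) * f - (p : PowerSeries K))

open Polynomial PowerSeries

section

variable {K : Type*} [Field K]

theorem exists_ne_zero_degree_le_coeff_mul_eq_zero (f : K⟦X⟧) (m n : ℕ) :
    ∃ q : K[X], q ≠ 0 ∧ q.degree ≤ n ∧
      ∀ k, m < k → k ≤ m + n → PowerSeries.coeff k ((q : K⟦X⟧) * f) = 0 := by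
  let φ : degreeLT K (n + 1) →ₗ[K] Fin n → K :=
    LinearMap.pi (fun i : Fin n => PowerSeries.coeff (m + 1 + i) ∘ₗ LinearMap.mulRight K f ∘ₗ
      (Polynomial.coeToPowerSeries.algHom K).toLinearMap) ∘ₗ (degreeLT K (n + 1)).subtype
  have hker : LinearMap.ker φ ≠ ⊥ := LinearMap.ker_ne_bot_of_finrank_lt <| by
    simp [(degreeLTEquiv K (n + 1)).finrank_eq]
  obtain ⟨⟨q, hq⟩, hφq, hq0⟩ := (Submodule.ne_bot_iff _).mp hker
  refine ⟨q, fun h => hq0 (Subtype.ext h), by rwa [degreeLT_succ_eq_degreeLE, mem_degreeLE] at hq,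
    fun k hmk hkn => ?_⟩
  have := congrFun hφq ⟨k - (m + 1), by omega⟩
  simpa [φ, show m + 1 + (k - (m + 1)) = k by omega] using this

theorem isPadePair_trunc_mul {f : K⟦X⟧} {m n : ℕ} {q : K[X]} (hq : q.degree ≤ n)
    (hcoeff : ∀ k, m < k → k ≤ m + n → PowerSeries.coeff k ((q : K⟦X⟧) * f) = 0) :
    IsPadePair f m n (trunc (m + 1) ((q : K⟦X⟧) * f)) q := by
  have hp := mem_degreeLT.mpr (degree_trunc_lt ((q : K⟦X⟧) * f) (m + 1))
  rw [degreeLT_succ_eq_degreeLE, mem_degreeLE] at hp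
  refine ⟨hp, hq, X_pow_dvd_iff.mpr fun k hk => ?_⟩
  rw [map_sub, Polynomial.coeff_coe, coeff_trunc]
  split_ifs with hkm
  · exact sub_self _
  · rw [hcoeff k (by omega) (by omega), sub_zero]

end

/-- For every formal power series `f` over a field `K` and all `m n : ℕ`, there exists
an `(m,n)`-Padé pair `(p, q)` for `f` with `q ≠ 0`. -/
theorem exists_pade_pair {K : Type*} [Field K] (f : PowerSeries K) (m n : ℕ) :
    ∃ p q : Polynomial K, IsPadePair f m n p q ∧ q ≠ 0 := by
  obtain ⟨q, hq0, hq, hcoeff⟩ := exists_ne_zero_degree_le_coeff_mul_eq_zero f m n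
  exact ⟨_, q, isPadePair_trunc_mul hq hcoeff, hq0⟩
end

section
/- If (p₁, q₁) and (p₂, q₂) are both (m,n)-Padé pairs for f, then p₁·q₂ = p₂·q₁ as polynomials; consequently all Padé pairs with nonzero denominator define the same rational function p/q. -/
/-- If `(p₁, q₁)` and `(p₂, q₂)` are both `(m,n)`-Padé pairs for `f`, then
`p₁·q₂ = p₂·q₁` as polynomials. -/
theorem pade_pair_cross_eq {K : Type*} [Field K] (f : PowerSeries K) (m n : ℕ)
    (p₁ q₁ p₂ q₂ : Polynomial K)
    (h₁ : IsPadePair f m n p₁ q₁) (h₂ : IsPadePair f m n p₂ q₂) :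
    p₁ * q₂ = p₂ * q₁ := by
  obtain ⟨hp₁, hq₁, d₁⟩ := h₁
  obtain ⟨hp₂, hq₂, d₂⟩ := h₂
  have key : (PowerSeries.X : PowerSeries K) ^ (m + n + 1) ∣
      ((p₂ * q₁ - p₁ * q₂ : Polynomial K) : PowerSeries K) := by
    have := dvd_sub (Dvd.dvd.mul_left d₁ (q₂ : PowerSeries K))
      (Dvd.dvd.mul_left d₂ (q₁ : PowerSeries K))
    have heq : (q₂ : PowerSeries K) * ((q₁ : PowerSeries K) * f - (p₁ : PowerSeries K)) -
        (q₁ : PowerSeries K) * ((q₂ : PowerSeries K) * f - (p₂ : PowerSeries K)) =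
        ((p₂ * q₁ - p₁ * q₂ : Polynomial K) : PowerSeries K) := by
      push_cast
      ring
    rwa [heq] at this
  have hdeg : (p₂ * q₁ - p₁ * q₂ : Polynomial K).degree ≤ (m + n : ℕ) := by
    apply le_trans (Polynomial.degree_sub_le _ _)
    apply max_le
    · apply le_trans (Polynomial.degree_mul_le _ _)
      push_cast
      exact add_le_add hp₂ hq₁
    · apply le_trans (Polynomial.degree_mul_le _ _)
      push_cast
      exact add_le_add hp₁ hq₂
  have hz : (p₂ * q₁ - p₁ * q₂ : Polynomial K) = 0 := by
    ext i
    rw [Polynomial.coeff_zero]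
    rcases lt_or_ge (i : ℕ) (m + n + 1) with hi | hi
    · have := (PowerSeries.X_pow_dvd_iff.mp key) i hi
      rw [Polynomial.coeff_coe] at this
      exact this
    · apply Polynomial.coeff_eq_zero_of_degree_lt
      apply lt_of_le_of_lt hdeg
      exact_mod_cast hi
  exact (sub_eq_zero.mp hz).symm
end

section
/- For every u ∈ ℂ^g, the family indexed by integer vectors n ∈ ℤ^g given by n ↦ exp(πi·nᵀBn + 2πi·nᵀu) is summable (the defining series of the Riemann theta function θ(u) converges absolutely); the symmetry of B and positive definiteness of the imaginary part of B ensure this for every u ∈ ℂ^g. -/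
/-!
Write `x = n` as a real vector and `A = Im B`. Then
`‖exp(πi nᵀBn + 2πi nᵀu)‖ = exp(-π xᵀAx - 2π xᵀ Im u)`, and a positive lower bound `c` of the
spectrum of `A` gives `c xᵀx ≤ xᵀAx`. The term is therefore bounded by the product over `i` of
the one-variable Jacobi theta terms `‖exp(πi n_i² (ic) + 2πi n_i u_i)‖`, each of which is
summable over `ℤ` because `Im (ic) > 0`, so their product is summable over `ℤ^g`.
-/

open Matrix Complex Real

/-- The term of the Riemann theta series associated with the `g×g` matrix `B`,
evaluated at `u ∈ ℂ^g` and indexed by the integer vector `n ∈ ℤ^g`: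
`exp(πi·nᵀBn + 2πi·nᵀu)`. -/
noncomputable def riemannThetaTerm {g : ℕ} (B : Matrix (Fin g) (Fin g) ℂ)
    (u : Fin g → ℂ) (n : Fin g → ℤ) : ℂ :=
  Complex.exp ((Real.pi : ℂ) * Complex.I *
      (dotProduct (fun i => (n i : ℂ)) (B.mulVec fun i => (n i : ℂ))) +
    2 * (Real.pi : ℂ) * Complex.I * dotProduct (fun i => (n i : ℂ)) u)

open scoped MatrixOrder in
theorem Matrix.PosDef.exists_pos_mul_dotProduct_self_le {ι : Type*} [Fintype ι]
    {A : Matrix ι ι ℝ} (hA : A.PosDef) :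
    ∃ c > 0, ∀ x : ι → ℝ, c * (x ⬝ᵥ x) ≤ x ⬝ᵥ (A *ᵥ x) := by
  classical
  cases isEmpty_or_nonempty ι
  · exact ⟨1, one_pos, fun x => by simp [dotProduct]⟩
  obtain ⟨c, hc, hcA⟩ := (CFC.exists_pos_algebraMap_le_iff hA.isHermitian.isSelfAdjoint).mpr
    fun _ hx => hA.isStrictlyPositive.spectrum_pos hx
  refine ⟨c, hc, fun x => ?_⟩
  simpa [sub_mulVec, Algebra.algebraMap_eq_smul_one, smul_mulVec, dotProduct_smul] using
    hcA.dotProduct_mulVec_nonneg x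

theorem summable_fin_prod_of_nonneg {α : Type*} {n : ℕ} {f : Fin n → α → ℝ}
    (hf : ∀ i, Summable (f i)) (hf0 : ∀ i a, 0 ≤ f i a) :
    Summable fun x : Fin n → α => ∏ i, f i (x i) := by
  induction n with
  | zero => exact summable_of_hasFiniteSupport (Set.toFinite _)
  | succ n ih =>
    refine (Fin.consEquiv fun _ => α).summable_iff.mp ?_
    have := (hf 0).mul_of_nonneg (ih (fun i => hf i.succ) fun i => hf0 i.succ) (hf0 0)
      fun x => Finset.prod_nonneg fun i _ => hf0 i.succ (x i)
    simpa [Function.comp_def, Fin.prod_univ_succ] using this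

section RiemannThetaTerm

variable {g : ℕ} (B : Matrix (Fin g) (Fin g) ℂ) (u : Fin g → ℂ) (n : Fin g → ℤ)

theorem norm_riemannThetaTerm :
    ‖riemannThetaTerm B u n‖ =
      rexp (-π * ((fun i => (n i : ℝ)) ⬝ᵥ (B.map im *ᵥ fun i => (n i : ℝ)))
        - 2 * π * ((fun i => (n i : ℝ)) ⬝ᵥ fun i => (u i).im)) := by
  simp [riemannThetaTerm, Complex.norm_exp, dotProduct, mulVec, Finset.mul_sum, sub_eq_add_neg]

theorem norm_riemannThetaTerm_le_prod {c : ℝ}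
    (hc : ∀ x : Fin g → ℝ, c * (x ⬝ᵥ x) ≤ x ⬝ᵥ (B.map im *ᵥ x)) :
    ‖riemannThetaTerm B u n‖ ≤ ∏ i, ‖jacobiTheta₂_term (n i) (u i) (c * I)‖ := by
  simp_rw [norm_riemannThetaTerm, norm_jacobiTheta₂_term, ← Real.exp_sum]
  gcongr
  set x : Fin g → ℝ := fun i => (n i : ℝ)
  have hsum : ∑ i, (-π * x i ^ 2 * ((c : ℂ) * I).im - 2 * π * x i * (u i).im) =
      -π * (c * (x ⬝ᵥ x)) - 2 * π * (x ⬝ᵥ fun i => (u i).im) := by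
    simp only [im_ofReal_mul, I_im, mul_one, dotProduct, Finset.mul_sum, ← Finset.sum_sub_distrib]
    exact Finset.sum_congr rfl fun i _ => by ring
  have := mul_le_mul_of_nonneg_left (hc x) pi_pos.le
  linarith

end RiemannThetaTerm

theorem riemannTheta_summable_general (g : ℕ) (B : Matrix (Fin g) (Fin g) ℂ)
    (hpos : (B.map Complex.im).PosDef) (u : Fin g → ℂ) :
    Summable (fun n : Fin g → ℤ => riemannThetaTerm B u n) := by
  obtain ⟨c, hc, hcB⟩ := hpos.exists_pos_mul_dotProduct_self_le
  have hθ : ∀ i, Summable fun m : ℤ => ‖jacobiTheta₂_term m (u i) (c * I)‖ := fun i =>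
    ((summable_jacobiTheta₂_term_iff _ _).mpr (by simpa using hc)).norm
  exact (summable_fin_prod_of_nonneg hθ fun _ _ => norm_nonneg _).of_norm_bounded
    (norm_riemannThetaTerm_le_prod B u · hcB)

/-- For `B` symmetric with positive definite imaginary part, the series defining the
Riemann theta function converges absolutely at every `u ∈ ℂ^g`. -/
theorem riemannTheta_summable (g : ℕ) (hg : 1 ≤ g) (B : Matrix (Fin g) (Fin g) ℂ)
    (hsym : B.IsSymm) (hpos : (B.map Complex.im).PosDef) (u : Fin g → ℂ) :
    Summable (fun n : Fin g → ℤ => riemannThetaTerm B u n) :=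
  riemannTheta_summable_general g B hpos u
end
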